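/- arXiv:2304.00435 — 2 statements merged into one kernel-verified Lean document; each statement's English description precedes it below -/
import Mathlib

section
/- Let (x*, λ*) satisfy the KKT conditions of the parametric QP min (1/2)xᵀHx + fᵀx subject to Ax ≤ b + Cθ̃ at parameter θ̃, with active set A = {j : Aʲx* = bʲ + Cʲθ̃}. If the KKT coefficient matrix [[H, A_Aᵀ],[−A_A, 0]] is invertible, then the map θ ↦ (x(θ), λ_A(θ)) defined by solving the linear KKT equality system is affine in θ, and for every θ for which x(θ) is primal feasible and λ_A(θ) ≥ 0, x(θ) is optimal for the QP at parameter θ. -/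
open Matrix

/-!
For each `θ`, the solution `(x, μ)` of the KKT equality system is a stationary point of the
objective `q` whose multipliers `μ` belong to active constraints holding with equality at `x`.
Since `H` is positive semidefinite, `q y ≥ q x + ∇q(x) ⬝ (y - x)`, and
`∇q(x) ⬝ (y - x) = -μ ⬝ A_A (y - x) ≥ 0` as soon as `μ ≥ 0` and `A_A y ≤ b_A + C_A θ = A_A x`.
Affinity is immediate: `θ` enters the right-hand side of the system linearly.
-/

namespace Matrix

variable {R ι κ α : Type*} [Fintype ι]

noncomputable def qpObjective (H : Matrix ι ι ℝ) (f x : ι → ℝ) : ℝ :=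
  (1 / 2) * (x ⬝ᵥ H *ᵥ x) + f ⬝ᵥ x

theorem dotProduct_mulVec_comm_of_isSymm [CommSemiring R] {H : Matrix ι ι R} (hH : H.IsSymm)
    (x y : ι → R) : x ⬝ᵥ H *ᵥ y = y ⬝ᵥ H *ᵥ x := by
  rw [dotProduct_mulVec, ← mulVec_transpose, hH.eq, dotProduct_comm]

theorem qpObjective_eq_add {H : Matrix ι ι ℝ} (hH : H.IsSymm) (f x y : ι → ℝ) :
    qpObjective H f y = qpObjective H f x + (H *ᵥ x + f) ⬝ᵥ (y - x)
      + (1 / 2) * ((y - x) ⬝ᵥ H *ᵥ (y - x)) := by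
  obtain ⟨h, rfl⟩ : ∃ h, y = x + h := ⟨y - x, by abel⟩
  simp only [qpObjective, add_sub_cancel_left, mulVec_add, dotProduct_add, add_dotProduct,
    dotProduct_comm (H *ᵥ x) h, dotProduct_comm f h, dotProduct_mulVec_comm_of_isSymm hH x h]
  ring

theorem qpObjective_le_of_stationary [Fintype κ] {H : Matrix ι ι ℝ} (hH : H.PosSemidef)
    {G : Matrix κ ι ℝ} {f x y : ι → ℝ} {μ : κ → ℝ} (hstat : H *ᵥ x + f + Gᵀ *ᵥ μ = 0)
    (hμ : 0 ≤ μ) (hy : G *ᵥ y ≤ G *ᵥ x) : qpObjective H f x ≤ qpObjective H f y := by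
  have hgrad : 0 ≤ (H *ᵥ x + f) ⬝ᵥ (y - x) := by
    rw [eq_neg_of_add_eq_zero_left hstat, neg_dotProduct, mulVec_transpose, ← dotProduct_mulVec,
      mulVec_sub, dotProduct_sub, neg_nonneg, sub_nonpos]
    exact dotProduct_le_dotProduct_of_nonneg_left hy hμ
  have hcurv : 0 ≤ (y - x) ⬝ᵥ H *ᵥ (y - x) := by
    simpa using hH.dotProduct_mulVec_nonneg (y - x)
  rw [qpObjective_eq_add (isHermitian_iff_isSymm.mp hH.1) f x y]
  linarith

theorem kkt_of_fromBlocks_mulVec [Ring R] [Fintype κ] {H : Matrix ι ι R} {G : Matrix κ ι R}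
    {x f : ι → R} {μ u : κ → R}
    (h : fromBlocks H Gᵀ (-G) 0 *ᵥ Sum.elim x μ = Sum.elim (-f) (-u)) :
    H *ᵥ x + f + Gᵀ *ᵥ μ = 0 ∧ G *ᵥ x = u := by
  rw [fromBlocks_mulVec, Sum.elim_eq_iff] at h
  simp only [Sum.elim_comp_inl, Sum.elim_comp_inr, neg_mulVec, zero_mulVec, add_zero,
    neg_inj] at h
  exact ⟨by rw [add_right_comm, h.1, neg_add_cancel], h.2⟩

theorem exists_affine_comp_of_affine [Fintype κ] [NonUnitalNonAssocSemiring R]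
    {v : (κ → R) → α → R} {T : Matrix α κ R} {c : α → R} (hv : ∀ θ, v θ = T *ᵥ θ + c)
    {β : Type*} (e : β → α) :
    ∃ (T' : Matrix β κ R) (c' : β → R), ∀ θ, (fun b => v θ (e b)) = T' *ᵥ θ + c' :=
  ⟨T.submatrix e id, c ∘ e, fun θ => by ext b; simp [hv, mulVec, dotProduct]⟩

end Matrix

theorem parametric_qp_affine_solution_map_general {n m d : ℕ}
    (H : Matrix (Fin n) (Fin n) ℝ) (hH : H.PosSemidef)
    (f : Fin n → ℝ) (A : Matrix (Fin m) (Fin n) ℝ) (b : Fin m → ℝ)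
    (C : Matrix (Fin m) (Fin d) ℝ)
    (Act : Finset (Fin m))
    -- the KKT coefficient matrix and its invertibility
    (K : Matrix (Fin n ⊕ {j // j ∈ Act}) (Fin n ⊕ {j // j ∈ Act}) ℝ)
    (hK : K = Matrix.fromBlocks H (Matrix.of fun i (j : {j // j ∈ Act}) => A j.1 i)
        (Matrix.of fun (j : {j // j ∈ Act}) i => -A j.1 i) 0)
    (hKinv : IsUnit K.det)
    -- the parametric primal-dual solution map defined from the linear KKT system
    (sol : (Fin d → ℝ) → (Fin n ⊕ {j // j ∈ Act}) → ℝ)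
    (hsol : ∀ θ, sol θ = K⁻¹.mulVec
        (Sum.elim (fun i => -f i) (fun (j : {j // j ∈ Act}) => -b j.1 - C.mulVec θ j.1))) :
    -- the maps `θ ↦ x(θ)` and `θ ↦ λ_A(θ)` are affine in `θ`
    ((∃ (Tx : Matrix (Fin n) (Fin d) ℝ) (kx : Fin n → ℝ),
        ∀ θ, (fun i => sol θ (Sum.inl i)) = Tx.mulVec θ + kx) ∧
      (∃ (TA : Matrix {j // j ∈ Act} (Fin d) ℝ) (kA : {j // j ∈ Act} → ℝ),
        ∀ θ, (fun j => sol θ (Sum.inr j)) = TA.mulVec θ + kA)) ∧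
    -- and wherever feasible with nonnegative multipliers, `x(θ)` is optimal
    (∀ θ : Fin d → ℝ,
      A.mulVec (fun i => sol θ (Sum.inl i)) ≤ b + C.mulVec θ →
      (∀ j : {j // j ∈ Act}, 0 ≤ sol θ (Sum.inr j)) →
      ∀ y : Fin n → ℝ, A.mulVec y ≤ b + C.mulVec θ →
        (1/2) * ((fun i => sol θ (Sum.inl i)) ⬝ᵥ H.mulVec (fun i => sol θ (Sum.inl i)))
          + f ⬝ᵥ (fun i => sol θ (Sum.inl i))
        ≤ (1/2) * (y ⬝ᵥ H.mulVec y) + f ⬝ᵥ y) := by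
  set G : Matrix {j // j ∈ Act} (Fin n) ℝ := A.submatrix Subtype.val id
  set rhs : (Fin d → ℝ) → (Fin n ⊕ {j // j ∈ Act}) → ℝ := fun θ =>
    Sum.elim (-f) (-(b + C *ᵥ θ) ∘ Subtype.val)
  have hsol_rhs : ∀ θ, sol θ = K⁻¹ *ᵥ rhs θ := fun θ => by
    rw [hsol θ]
    congr 1
    ext (i | j)
    · rfl
    · exact (neg_add' _ _).symm
  have hrhs : ∀ θ, rhs θ = fromRows 0 (-C.submatrix Subtype.val id) *ᵥ θ + rhs 0 := fun θ => by
    ext (i | j) <;> simp [rhs, mulVec, dotProduct]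
  have haffine : ∀ θ, sol θ = (K⁻¹ * fromRows 0 (-C.submatrix Subtype.val id)) *ᵥ θ
      + K⁻¹ *ᵥ rhs 0 := fun θ => by
    rw [hsol_rhs, hrhs, mulVec_add, mulVec_mulVec]
    rfl
  refine ⟨⟨exists_affine_comp_of_affine haffine Sum.inl,
    exists_affine_comp_of_affine haffine Sum.inr⟩, fun θ _ hμ y hy => ?_⟩
  have hKsol :
      fromBlocks H Gᵀ (-G) 0 *ᵥ Sum.elim (sol θ ∘ Sum.inl) (sol θ ∘ Sum.inr) = rhs θ := by
    have hKG : K = fromBlocks H Gᵀ (-G) 0 := hK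
    rw [Sum.elim_comp_inl_inr, ← hKG, hsol_rhs, mulVec_mulVec, mul_nonsing_inv _ hKinv,
      one_mulVec]
  obtain ⟨hstat, hact⟩ := kkt_of_fromBlocks_mulVec hKsol
  exact qpObjective_le_of_stationary hH hstat hμ fun j => (hy j).trans_eq (congrFun hact j).symm

/-- If the KKT coefficient matrix `[[H, A_Aᵀ],[−A_A, 0]]` for the active set `Act`
at a KKT point `(x⋆, λ⋆)` of the parametric QP `min (1/2)xᵀHx + fᵀx  s.t.  Ax ≤ b + Cθ`
is invertible, then the primal-dual solution map obtained by solving the linear KKT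
equality system is affine in `θ`, and whenever the resulting point is primal feasible
with nonnegative active multipliers, it is optimal for the QP at that parameter. -/
theorem parametric_qp_affine_solution_map {n m d : ℕ}
    (H : Matrix (Fin n) (Fin n) ℝ) (hH : H.PosSemidef)
    (f : Fin n → ℝ) (A : Matrix (Fin m) (Fin n) ℝ) (b : Fin m → ℝ)
    (C : Matrix (Fin m) (Fin d) ℝ) (θt : Fin d → ℝ)
    (xs : Fin n → ℝ) (ls : Fin m → ℝ)
    (Act : Finset (Fin m))
    -- `(xs, ls)` satisfies the KKT conditions at `θt`
    (hstat : H.mulVec xs + f + Aᵀ.mulVec ls = 0)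
    (hfeas : A.mulVec xs ≤ b + C.mulVec θt)
    (hdual : 0 ≤ ls)
    (hcs : ∀ j, ls j * (A.mulVec xs j - b j - C.mulVec θt j) = 0)
    -- `Act` is the active set at `θt`
    (hAct : ∀ j : Fin m, j ∈ Act ↔ A.mulVec xs j = b j + C.mulVec θt j)
    -- the KKT coefficient matrix and its invertibility
    (K : Matrix (Fin n ⊕ {j // j ∈ Act}) (Fin n ⊕ {j // j ∈ Act}) ℝ)
    (hK : K = Matrix.fromBlocks H (Matrix.of fun i (j : {j // j ∈ Act}) => A j.1 i)
        (Matrix.of fun (j : {j // j ∈ Act}) i => -A j.1 i) 0)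
    (hKinv : IsUnit K.det)
    -- the parametric primal-dual solution map defined from the linear KKT system
    (sol : (Fin d → ℝ) → (Fin n ⊕ {j // j ∈ Act}) → ℝ)
    (hsol : ∀ θ, sol θ = K⁻¹.mulVec
        (Sum.elim (fun i => -f i) (fun (j : {j // j ∈ Act}) => -b j.1 - C.mulVec θ j.1))) :
    -- the maps `θ ↦ x(θ)` and `θ ↦ λ_A(θ)` are affine in `θ`
    ((∃ (Tx : Matrix (Fin n) (Fin d) ℝ) (kx : Fin n → ℝ),
        ∀ θ, (fun i => sol θ (Sum.inl i)) = Tx.mulVec θ + kx) ∧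
      (∃ (TA : Matrix {j // j ∈ Act} (Fin d) ℝ) (kA : {j // j ∈ Act} → ℝ),
        ∀ θ, (fun j => sol θ (Sum.inr j)) = TA.mulVec θ + kA)) ∧
    -- and wherever feasible with nonnegative multipliers, `x(θ)` is optimal
    (∀ θ : Fin d → ℝ,
      A.mulVec (fun i => sol θ (Sum.inl i)) ≤ b + C.mulVec θ →
      (∀ j : {j // j ∈ Act}, 0 ≤ sol θ (Sum.inr j)) →
      ∀ y : Fin n → ℝ, A.mulVec y ≤ b + C.mulVec θ →
        (1/2) * ((fun i => sol θ (Sum.inl i)) ⬝ᵥ H.mulVec (fun i => sol θ (Sum.inl i)))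
          + f ⬝ᵥ (fun i => sol θ (Sum.inl i))
        ≤ (1/2) * (y ⬝ᵥ H.mulVec y) + f ⬝ᵥ y) :=
  parametric_qp_affine_solution_map_general H hH f A b C Act K hK hKinv sol hsol
end

section
/- For the linear complementarity problem w = Mz + q, wᵀz = 0, w,z ≥ 0 with M positive semidefinite (vᵀMv ≥ 0 for all v), the solution set is convex; moreover if (w¹,z¹) and (w²,z²) are two solutions then (z¹ − z²)ᵀ(M + Mᵀ)(z¹ − z²) = 0 and (w¹)ᵀz² + (w²)ᵀz¹ = 0. -/
/-!
For two solutions, `M (z₁ - z₂) = w₁ - w₂`, so complementarity turns the quadratic form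
`(z₁ - z₂)ᵀ M (z₁ - z₂)` into `-(w₁ᵀz₂ + w₂ᵀz₁)`. The left side is nonnegative by positive
semidefiniteness and both cross terms are nonnegative by sign feasibility, so everything
vanishes. Vanishing cross terms make complementarity survive convex combinations, while the
linear and sign constraints are convex anyway.
-/

open Matrix

namespace LCP

variable {ι R : Type*} [Fintype ι] [CommRing R] [LinearOrder R]

def IsSolution (M : Matrix ι ι R) (q w z : ι → R) : Prop :=
  w = M *ᵥ z + q ∧ 0 ≤ w ∧ 0 ≤ z ∧ w ⬝ᵥ z = 0

variable {M : Matrix ι ι R} {q w₁ z₁ w₂ z₂ : ι → R}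

theorem quadForm_sub_eq_neg_cross (h₁ : IsSolution M q w₁ z₁) (h₂ : IsSolution M q w₂ z₂) :
    (z₁ - z₂) ⬝ᵥ M *ᵥ (z₁ - z₂) = -(w₁ ⬝ᵥ z₂ + w₂ ⬝ᵥ z₁) := by
  obtain ⟨hw₁, -, -, hc₁⟩ := h₁
  obtain ⟨hw₂, -, -, hc₂⟩ := h₂
  have hdiff : M *ᵥ (z₁ - z₂) = w₁ - w₂ := by
    rw [mulVec_sub, hw₁, hw₂, add_sub_add_right_eq_sub]
  rw [hdiff, sub_dotProduct, dotProduct_sub, dotProduct_sub, dotProduct_comm z₁ w₁,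
    dotProduct_comm z₁ w₂, dotProduct_comm z₂ w₁, dotProduct_comm z₂ w₂, hc₁, hc₂]
  ring

variable [IsStrictOrderedRing R]

theorem cross_eq_zero (hM : ∀ v, 0 ≤ v ⬝ᵥ M *ᵥ v)
    (h₁ : IsSolution M q w₁ z₁) (h₂ : IsSolution M q w₂ z₂) :
    w₁ ⬝ᵥ z₂ = 0 ∧ w₂ ⬝ᵥ z₁ = 0 := by
  have hquad := quadForm_sub_eq_neg_cross h₁ h₂ ▸ hM (z₁ - z₂)
  have hn₁₂ : 0 ≤ w₁ ⬝ᵥ z₂ := dotProduct_nonneg_of_nonneg h₁.2.1 h₂.2.2.1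
  have hn₂₁ : 0 ≤ w₂ ⬝ᵥ z₁ := dotProduct_nonneg_of_nonneg h₂.2.1 h₁.2.2.1
  constructor <;> linarith

theorem quadForm_sub_eq_zero (hM : ∀ v, 0 ≤ v ⬝ᵥ M *ᵥ v)
    (h₁ : IsSolution M q w₁ z₁) (h₂ : IsSolution M q w₂ z₂) :
    (z₁ - z₂) ⬝ᵥ M *ᵥ (z₁ - z₂) = 0 := by
  obtain ⟨h₁₂, h₂₁⟩ := cross_eq_zero hM h₁ h₂
  rw [quadForm_sub_eq_neg_cross h₁ h₂, h₁₂, h₂₁, add_zero, neg_zero]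

theorem isSolution_convexComb (hM : ∀ v, 0 ≤ v ⬝ᵥ M *ᵥ v)
    (h₁ : IsSolution M q w₁ z₁) (h₂ : IsSolution M q w₂ z₂)
    {a b : R} (ha : 0 ≤ a) (hb : 0 ≤ b) (hab : a + b = 1) :
    IsSolution M q (a • w₁ + b • w₂) (a • z₁ + b • z₂) := by
  obtain ⟨h₁₂, h₂₁⟩ := cross_eq_zero hM h₁ h₂
  obtain ⟨hw₁, hw₁0, hz₁0, hc₁⟩ := h₁
  obtain ⟨hw₂, hw₂0, hz₂0, hc₂⟩ := h₂
  refine ⟨?_, ?_, ?_, ?_⟩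
  · calc a • w₁ + b • w₂ = a • (M *ᵥ z₁) + b • (M *ᵥ z₂) + (a + b) • q := by
          rw [hw₁, hw₂]; module
      _ = M *ᵥ (a • z₁ + b • z₂) + q := by
          rw [hab, one_smul, mulVec_add, mulVec_smul, mulVec_smul]
  · exact add_nonneg (smul_nonneg ha hw₁0) (smul_nonneg hb hw₂0)
  · exact add_nonneg (smul_nonneg ha hz₁0) (smul_nonneg hb hz₂0)
  · simp only [add_dotProduct, dotProduct_add, smul_dotProduct, dotProduct_smul,
      hc₁, hc₂, h₁₂, h₂₁, smul_zero, add_zero]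

theorem convex_setOf_isSolution (hM : ∀ v, 0 ≤ v ⬝ᵥ M *ᵥ v) :
    Convex R {wz : (ι → R) × (ι → R) | IsSolution M q wz.1 wz.2} :=
  fun _ h₁ _ h₂ _ _ ha hb hab => isSolution_convexComb hM h₁ h₂ ha hb hab

end LCP

theorem Matrix.dotProduct_add_transpose_mulVec {ι R : Type*} [Fintype ι] [CommRing R]
    (M : Matrix ι ι R) (v : ι → R) :
    v ⬝ᵥ (M + Mᵀ) *ᵥ v = 2 * (v ⬝ᵥ M *ᵥ v) := by
  rw [add_mulVec, dotProduct_add, mulVec_transpose, dotProduct_comm v (v ᵥ* M),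
    ← dotProduct_mulVec, two_mul]

/-- For the LCP `w = Mz + q`, `wᵀz = 0`, `w, z ≥ 0` with `M` positive semidefinite
(`vᵀMv ≥ 0` for all `v`), the solution set is convex; moreover, any two solutions
`(w¹,z¹)`, `(w²,z²)` satisfy `(z¹−z²)ᵀ(M+Mᵀ)(z¹−z²) = 0` and `(w¹)ᵀz² + (w²)ᵀz¹ = 0`. -/
theorem lcp_psd_solution_set_convex {p : ℕ}
    (M : Matrix (Fin p) (Fin p) ℝ)
    (hM : ∀ v : Fin p → ℝ, 0 ≤ v ⬝ᵥ M.mulVec v)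
    (q : Fin p → ℝ)
    (Sol : Set ((Fin p → ℝ) × (Fin p → ℝ)))
    (hSol : Sol = {wz | wz.1 = M.mulVec wz.2 + q ∧ 0 ≤ wz.1 ∧ 0 ≤ wz.2 ∧
        wz.1 ⬝ᵥ wz.2 = 0}) :
    Convex ℝ Sol ∧
    ∀ w₁ z₁ w₂ z₂ : Fin p → ℝ, (w₁, z₁) ∈ Sol → (w₂, z₂) ∈ Sol →
      (z₁ - z₂) ⬝ᵥ (M + Mᵀ).mulVec (z₁ - z₂) = 0 ∧
      w₁ ⬝ᵥ z₂ + w₂ ⬝ᵥ z₁ = 0 := by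
  subst hSol
  refine ⟨LCP.convex_setOf_isSolution hM, fun w₁ z₁ w₂ z₂ h₁ h₂ => ?_⟩
  obtain ⟨h₁₂, h₂₁⟩ := LCP.cross_eq_zero hM h₁ h₂
  rw [dotProduct_add_transpose_mulVec, LCP.quadForm_sub_eq_zero hM h₁ h₂, h₁₂, h₂₁]
  norm_num
end
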